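/- arXiv:1811.04803 — 5 statements merged into one kernel-verified Lean document; each statement's English description precedes it below -/
import Mathlib

section
/- Let G = (V, E, L) be a colored directed graph containing two intersecting cycles with the same coloring, i.e., periodic cycles π₁, π₂ : ℤ → V with π₁ ≠ π₂, L(π₁(i)) = L(π₂(i)) for all i, and π₁(i₀) = π₂(i₀) for some i₀. Then G has same-colored out-neighbors: there exist a node v and distinct nodes w₁ ≠ w₂ with E(v, w₁), E(v, w₂), and L(w₁) = L(w₂). -/
/-!
Where the two cycles agree, `π₁ (i + 1)` and `π₂ (i + 1)` are same-colored out-neighbors of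
`π₁ i = π₂ i` unless they coincide. If they always coincide, agreement at `i₀` spreads to every
`i ≥ i₀`, and the common period `p₁ p₂` carries it to all of `ℤ`, contradicting `π₁ ≠ π₂`.
-/

open Function

lemma Function.Periodic.eq_of_forall_ge_eq {α : Type*} {f g : ℤ → α} {p q : ℤ}
    (hf : Periodic f p) (hg : Periodic g q) (hp : 0 < p) (hq : 0 < q) (i₀ : ℤ)
    (h : ∀ i, i₀ ≤ i → f i = g i) : f = g := by
  funext i
  set n := |i₀ - i|
  have hge : i₀ ≤ i + n * (p * q) := by
    have : n ≤ n * (p * q) := le_mul_of_one_le_right (abs_nonneg _) (mul_pos hp hq)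
    linarith [le_abs_self (i₀ - i)]
  calc f i = f (i + (n * q) * p) := ((hf.int_mul (n * q)) i).symm
    _ = g (i + (n * p) * q) := by convert h _ hge using 2 <;> ring
    _ = g i := (hg.int_mul (n * p)) i

/-- If a colored directed graph `(V, E, L)` contains two intersecting cycles with the
same coloring (periodic cycles `π₁ ≠ π₂` with `L (π₁ i) = L (π₂ i)` for all `i`, and
`π₁ i₀ = π₂ i₀` for some `i₀`), then it has same-colored out-neighbors. -/
theorem intersecting_cycles_give_same_colored_out_neighbors
    {V Φ : Type*} (E : V → V → Prop) (L : V → Φ)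
    (π₁ π₂ : ℤ → V)
    (hedge₁ : ∀ i, E (π₁ i) (π₁ (i + 1)))
    (hper₁ : ∃ p : ℤ, 0 < p ∧ ∀ i, π₁ (i + p) = π₁ i)
    (hedge₂ : ∀ i, E (π₂ i) (π₂ (i + 1)))
    (hper₂ : ∃ p : ℤ, 0 < p ∧ ∀ i, π₂ (i + p) = π₂ i)
    (hne : π₁ ≠ π₂)
    (hcol : ∀ i, L (π₁ i) = L (π₂ i))
    (hint : ∃ i₀, π₁ i₀ = π₂ i₀) :
    ∃ v w₁ w₂ : V, w₁ ≠ w₂ ∧ E v w₁ ∧ E v w₂ ∧ L w₁ = L w₂ := by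
  obtain ⟨p₁, hp₁, hperiod₁⟩ := hper₁
  obtain ⟨p₂, hp₂, hperiod₂⟩ := hper₂
  obtain ⟨i₀, hi₀⟩ := hint
  by_contra hnone
  push Not at hnone
  have hstep : ∀ i, π₁ i = π₂ i → π₁ (i + 1) = π₂ (i + 1) := fun i hi =>
    by_contra fun hsucc => hnone _ _ _ hsucc (hedge₁ i) (hi ▸ hedge₂ i) (hcol (i + 1))
  have hforward : ∀ i, i₀ ≤ i → π₁ i = π₂ i := fun i hi =>
    Int.leInduction hi₀ (fun n _ => hstep n) i hi
  exact hne (Periodic.eq_of_forall_ge_eq hperiod₁ hperiod₂ hp₁ hp₂ i₀ hforward)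
end

section
/- Let G = (V, E, L) be a colored directed graph. Then G satisfies the unique path property — for every n ≥ 1, every color sequence w : {0,…,n} → Φ, and every node v, there is at most one path x of length n with x(0) = x(n) = v and L(x(i)) = w(i) for all i — if and only if G contains no pair of intersecting cycles with the same coloring (periodic cycles π₁ ≠ π₂ with L(π₁(i)) = L(π₂(i)) for all i and π₁(i₀) = π₂(i₀) for some i₀). In the paper's terminology, a graph is trackable if and only if it has no intersecting cycles with the same coloring. -/
/-!
Two closed walks at `v` of length `n` with the same colors repeat with period `n` to two
same-colored cycles meeting at `v`; they are distinct cycles exactly when the walks differ.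
Conversely, two same-colored cycles meeting at `i₀` have a common period `n`, and reading both
from `i₀` for `n` steps gives two same-colored closed walks at their common node. By the unique
path property these walks coincide, and then so do the cycles, by periodicity.
-/

open Function

section Periodic

variable {α β : Type*}

theorem Function.Periodic.apply_natMod {f : ℤ → α} {n : ℤ} (h : Periodic f n) (hn : n ≠ 0)
    (j : ℤ) : f (j.natMod n) = f j := by
  rw [Int.natMod, Int.toNat_of_nonneg (Int.emod_nonneg j hn), Int.emod_def, mul_comm]
  exact h.sub_int_mul_eq (j / n)

theorem eq_of_periodic_of_forall_lt {f g : ℤ → α} {n : ℕ} (hf : Periodic f n)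
    (hg : Periodic g n) (hn : n ≠ 0) (a : ℤ) (h : ∀ k < n, f (a + k) = g (a + k)) : f = g := by
  funext j
  have hn' : (n : ℤ) ≠ 0 := by exact_mod_cast hn
  rw [← add_sub_cancel a j, ← (hf.const_add a).apply_natMod hn' (j - a),
    ← (hg.const_add a).apply_natMod hn' (j - a)]
  exact h _ (Int.natMod_lt hn)

theorem exists_nat_common_period {f : ℤ → α} {g : ℤ → β} {p q : ℤ} (hf : Periodic f p)
    (hp : 0 < p) (hg : Periodic g q) (hq : 0 < q) :
    ∃ n : ℕ, n ≠ 0 ∧ Periodic f n ∧ Periodic g n := by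
  lift p to ℕ using hp.le
  lift q to ℕ using hq.le
  refine ⟨p * q, mul_ne_zero (by omega) (by omega), ?_, ?_⟩
  · simpa [mul_comm] using hf.nat_mul q
  · simpa using hg.nat_mul p

end Periodic

section CyclicExtension

variable {V : Type*}

def cyclicExtension (n : ℕ) (x : ℕ → V) (j : ℤ) : V :=
  x (j.natMod n)

theorem periodic_cyclicExtension (n : ℕ) (x : ℕ → V) : Periodic (cyclicExtension n x) n := by
  intro j
  simp only [cyclicExtension, Int.natMod, Int.add_emod_right]

theorem cyclicExtension_natCast_of_le {n : ℕ} {x : ℕ → V} (hcl : x n = x 0) {i : ℕ}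
    (hi : i ≤ n) : cyclicExtension n x i = x i := by
  rw [cyclicExtension, Int.natMod, ← Int.natCast_mod, Int.toNat_natCast]
  rcases hi.lt_or_eq with hi | rfl
  · rw [Nat.mod_eq_of_lt hi]
  · rw [Nat.mod_self, hcl]

theorem cyclicExtension_adj (E : V → V → Prop) {n : ℕ} {x : ℕ → V} (hn : n ≠ 0)
    (hE : ∀ i < n, E (x i) (x (i + 1))) (hcl : x n = x 0) (j : ℤ) :
    E (cyclicExtension n x j) (cyclicExtension n x (j + 1)) := by
  have hn' : (n : ℤ) ≠ 0 := by exact_mod_cast hn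
  have hper := periodic_cyclicExtension n x
  rw [← hper.apply_natMod hn' j, ← (hper.add_const 1).apply_natMod hn' j]
  have hr : j.natMod n < n := Int.natMod_lt hn
  rw [cyclicExtension_natCast_of_le hcl hr.le, ← Nat.cast_succ,
    cyclicExtension_natCast_of_le hcl hr]
  exact hE _ hr

end CyclicExtension

section Trackable

variable {V Φ : Type*} (E : V → V → Prop) (L : V → Φ)

def Trackable : Prop :=
  ∀ (n : ℕ), 1 ≤ n → ∀ (w : ℕ → Φ) (v : V) (x x' : ℕ → V),
    (∀ i < n, E (x i) (x (i + 1))) →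
    (∀ i < n, E (x' i) (x' (i + 1))) →
    x 0 = v → x n = v → x' 0 = v → x' n = v →
    (∀ i ≤ n, L (x i) = w i) → (∀ i ≤ n, L (x' i) = w i) →
    ∀ i ≤ n, x i = x' i

variable {E L}

theorem Trackable.eq_of_periodic (h : Trackable E L) {π₁ π₂ : ℤ → V}
    (hE₁ : ∀ i, E (π₁ i) (π₁ (i + 1))) (hE₂ : ∀ i, E (π₂ i) (π₂ (i + 1))) {n : ℕ} (hn : n ≠ 0)
    (hp₁ : Periodic π₁ n) (hp₂ : Periodic π₂ n) (hL : ∀ i, L (π₁ i) = L (π₂ i)) {i₀ : ℤ}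
    (hi₀ : π₁ i₀ = π₂ i₀) : π₁ = π₂ := by
  refine eq_of_periodic_of_forall_lt hp₁ hp₂ hn i₀ fun k hk =>
    h n (by omega) (fun k => L (π₁ (i₀ + k))) (π₁ i₀) (fun k => π₁ (i₀ + k))
      (fun k => π₂ (i₀ + k)) (fun i _ => ?_) (fun i _ => ?_) (by simp) (hp₁ i₀)
      (by simpa using hi₀.symm) ((hp₂ i₀).trans hi₀.symm) (fun _ _ => rfl)
      (fun i _ => (hL _).symm) k hk.le
  · simpa [add_assoc] using hE₁ (i₀ + i)
  · simpa [add_assoc] using hE₂ (i₀ + i)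

end Trackable

/-- A colored directed graph satisfies the unique path property (for every `n ≥ 1`,
every color sequence `w`, and every node `v`, there is at most one path of length `n`
from `v` back to `v` with color sequence `w`) if and only if it contains no pair of
intersecting cycles with the same coloring.  In the paper's terminology: a graph is
trackable iff it has no intersecting cycles with the same coloring. -/
theorem trackable_iff_no_intersecting_cycles
    {V Φ : Type*} (E : V → V → Prop) (L : V → Φ) :
    (∀ (n : ℕ), 1 ≤ n → ∀ (w : ℕ → Φ) (v : V) (x x' : ℕ → V),
      (∀ i < n, E (x i) (x (i + 1))) →
      (∀ i < n, E (x' i) (x' (i + 1))) →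
      x 0 = v → x n = v → x' 0 = v → x' n = v →
      (∀ i ≤ n, L (x i) = w i) → (∀ i ≤ n, L (x' i) = w i) →
      ∀ i ≤ n, x i = x' i) ↔
    ¬ ∃ π₁ π₂ : ℤ → V,
        (∀ i, E (π₁ i) (π₁ (i + 1))) ∧ (∃ p : ℤ, 0 < p ∧ ∀ i, π₁ (i + p) = π₁ i) ∧
        (∀ i, E (π₂ i) (π₂ (i + 1))) ∧ (∃ p : ℤ, 0 < p ∧ ∀ i, π₂ (i + p) = π₂ i) ∧
        (∀ i, L (π₁ i) = L (π₂ i)) ∧ (∃ i₀, π₁ i₀ = π₂ i₀) ∧ π₁ ≠ π₂ := by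
  constructor
  · rintro h ⟨π₁, π₂, hE₁, ⟨p₁, hp₁, hper₁⟩, hE₂, ⟨p₂, hp₂, hper₂⟩, hL, ⟨i₀, hi₀⟩, hne⟩
    obtain ⟨n, hn, hn₁, hn₂⟩ := exists_nat_common_period hper₁ hp₁ hper₂ hp₂
    exact hne (Trackable.eq_of_periodic h hE₁ hE₂ hn hn₁ hn₂ hL hi₀)
  · intro h n hn w v x x' hE hE' hx0 hxn hx'0 hx'n hw hw'
    have hn0 : n ≠ 0 := by omega
    have hnpos : (0 : ℤ) < n := by omega
    by_contra! hne
    obtain ⟨i, hi, hxi⟩ := hne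
    have hcl : x n = x 0 := hxn.trans hx0.symm
    have hcl' : x' n = x' 0 := hx'n.trans hx'0.symm
    refine h ⟨cyclicExtension n x, cyclicExtension n x', cyclicExtension_adj E hn0 hE hcl,
      ⟨n, hnpos, periodic_cyclicExtension n x⟩, cyclicExtension_adj E hn0 hE' hcl',
      ⟨n, hnpos, periodic_cyclicExtension n x'⟩,
      fun j => (hw _ (Int.natMod_lt hn0).le).trans (hw' _ (Int.natMod_lt hn0).le).symm,
      ⟨(0 : ℕ), ?_⟩, fun heq => hxi ?_⟩
    · rw [cyclicExtension_natCast_of_le hcl (Nat.zero_le n),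
        cyclicExtension_natCast_of_le hcl' (Nat.zero_le n), hx0, hx'0]
    · simpa only [cyclicExtension_natCast_of_le hcl hi, cyclicExtension_natCast_of_le hcl' hi]
        using congrFun heq i
end

section
/- Let G = (V, E, L) be a colored directed graph with V finite, |V| = m, and suppose the auxiliary graph G² is acyclic (it contains no periodic cycle; equivalently no walk in G² revisits a node). Then G is partly a posteriori observable: for any two paths x and x′ of length n ≥ m² in G with the same color sequence (L(x(i)) = L(x′(i)) for all 0 ≤ i ≤ n), there exists an index t ≤ m² with x(t) = x′(t); that is, a sufficiently long observation sequence unambiguously determines the state at at least one point in the past. -/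
/-- Edge relation of the auxiliary graph `G²` of a colored directed graph `(V, E, L)`:
its nodes are the ordered pairs of *distinct* nodes of `G`, and there is an edge from
`(v₁, v₂)` to `(v₁', v₂')` iff `E v₁ v₁'`, `E v₂ v₂'`, and `L v₁' = L v₂'`. -/
def G2Edge {V Φ : Type*} (E : V → V → Prop) (L : V → Φ) :
    V × V → V × V → Prop :=
  fun p q => p.1 ≠ p.2 ∧ q.1 ≠ q.2 ∧ E p.1 q.1 ∧ E p.2 q.2 ∧ L q.1 = L q.2

/-- If `V` is finite with `m` nodes and the auxiliary graph `G²` is acyclic (contains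
no periodic cycle), then `G` is partly a posteriori observable: any two paths of length
`n ≥ m²` with the same color sequence coincide at some index `t ≤ m²`. -/
theorem G2_acyclic_implies_partly_a_posteriori_observable
    {V Φ : Type*} [Fintype V] (E : V → V → Prop) (L : V → Φ)
    (m : ℕ) (hm : Fintype.card V = m)
    (hacyc : ¬ ∃ γ : ℤ → V × V,
      (∀ i, G2Edge E L (γ i) (γ (i + 1))) ∧ ∃ p : ℤ, 0 < p ∧ ∀ i, γ (i + p) = γ i)
    (n : ℕ) (hn : m ^ 2 ≤ n) (x x' : ℕ → V)
    (hx : ∀ i < n, E (x i) (x (i + 1)))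
    (hx' : ∀ i < n, E (x' i) (x' (i + 1)))
    (hcol : ∀ i ≤ n, L (x i) = L (x' i)) :
    ∃ t ≤ m ^ 2, x t = x' t := by
  by_contra hcon
  push_neg at hcon
  have hcard : Fintype.card (V × V) < Fintype.card (Fin (m ^ 2 + 1)) := by
    simp [Fintype.card_prod, hm, pow_two]
  obtain ⟨a, b, hab, heq⟩ := Fintype.exists_ne_map_eq_of_card_lt
    (fun t : Fin (m ^ 2 + 1) => (x t.val, x' t.val)) hcard
  wlog hlt : (a : ℕ) < (b : ℕ) generalizing a b
  · exact this b a hab.symm heq.symm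
      (lt_of_le_of_ne (not_lt.1 hlt) fun h => hab (Fin.ext h.symm))
  obtain ⟨i, hidef⟩ : ∃ i : ℕ, i = (a : ℕ) := ⟨_, rfl⟩
  obtain ⟨j, hjdef⟩ : ∃ j : ℕ, j = (b : ℕ) := ⟨_, rfl⟩
  rw [← hidef, ← hjdef] at hlt
  have hxij : x i = x j := by
    rw [hidef, hjdef]; exact congrArg Prod.fst heq
  have hx'ij : x' i = x' j := by
    rw [hidef, hjdef]; exact congrArg Prod.snd heq
  have hjm : j ≤ m ^ 2 := by rw [hjdef]; exact Nat.lt_succ_iff.mp b.isLt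
  obtain ⟨p, hpdef⟩ : ∃ p : ℤ, p = (j : ℤ) - (i : ℤ) := ⟨_, rfl⟩
  have hp : 0 < p := by omega
  have hmf : ∀ k : ℤ, 0 ≤ k % p ∧ k % p < p :=
    fun k => ⟨Int.emod_nonneg k (by omega), Int.emod_lt_of_pos k hp⟩
  have hgbound : ∀ k : ℤ, i + (k % p).toNat < j := by
    intro k
    obtain ⟨h0, h1⟩ := hmf k
    omega
  apply hacyc
  refine ⟨fun k => (x (i + (k % p).toNat), x' (i + (k % p).toNat)), ?_, p, hp, ?_⟩
  · intro k
    show G2Edge E L (x (i + (k % p).toNat), x' (i + (k % p).toNat))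
      (x (i + ((k + 1) % p).toNat), x' (i + ((k + 1) % p).toNat))
    obtain ⟨h0, h1⟩ := hmf k
    have hb1 := hgbound k
    have hb2 := hgbound (k + 1)
    have hne1 : x (i + (k % p).toNat) ≠ x' (i + (k % p).toNat) := hcon _ (by omega)
    have hne2 : x (i + ((k + 1) % p).toNat) ≠ x' (i + ((k + 1) % p).toNat) :=
      hcon _ (by omega)
    have hmod : (k + 1) % p = (k % p + 1) % p := by
      conv_lhs => rw [← Int.emod_add_mul_ediv k p]
      rw [add_right_comm]
      exact Int.add_mul_emod_self_left _ _ _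
    rcases lt_or_eq_of_le (by omega : k % p + 1 ≤ p) with hcase | hcase
    · have hmk : (k + 1) % p = k % p + 1 := by
        rw [hmod, Int.emod_eq_of_lt (by omega) hcase]
      have hgk1 : i + ((k + 1) % p).toNat = (i + (k % p).toNat) + 1 := by
        rw [hmk]; omega
      have hsn : i + (k % p).toNat < n := by omega
      rw [hgk1] at hne2 ⊢
      exact ⟨hne1, hne2, hx _ hsn, hx' _ hsn, hcol _ (by omega)⟩
    · have hmk : (k + 1) % p = 0 := by rw [hmod, hcase, Int.emod_self]
      have hgk1 : i + ((k + 1) % p).toNat = i := by rw [hmk]; simp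
      have hgk : i + (k % p).toNat = j - 1 := by omega
      have hj1 : j - 1 < n := by omega
      have hE : E (x (j - 1)) (x j) := by
        have h := hx (j - 1) hj1
        rwa [show j - 1 + 1 = j by omega] at h
      have hE' : E (x' (j - 1)) (x' j) := by
        have h := hx' (j - 1) hj1
        rwa [show j - 1 + 1 = j by omega] at h
      rw [hgk1] at hne2 ⊢
      rw [hgk] at hne1 ⊢
      rw [hxij, hx'ij] at hne2 ⊢
      exact ⟨hne1, hne2, hE, hE', hcol j (by omega)⟩
  · intro k
    have hper : (k + p) % p = k % p := by
      rw [show k + p = k + p * 1 by ring]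
      exact Int.add_mul_emod_self_left k p 1
    simp only [hper]
end

section
/- Let G = (V, E, L) be a colored directed graph with V finite, |V| = m, such that the auxiliary graph G² is acyclic (no walk in G² revisits a node) and G has no same-colored out-neighbors (for all v, w₁, w₂: if E(v, w₁), E(v, w₂), and L(w₁) = L(w₂), then w₁ = w₂). Then G is observable with burn-in time T = m²: for any two paths xและ x′ of length n ≥ m² with the same color sequence (L(x(i)) = L(x′(i)) for all 0 ≤ i ≤ n), one has x(s) = x′(s) for every index s with m² ≤ s ≤ n; that is, the current node is unambiguously determined by the observed colors once at least T observations have been made. -/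
def HasPeriodicWalk {α : Type*} (R : α → α → Prop) : Prop :=
  ∃ γ : ℤ → α, (∀ i, R (γ i) (γ (i + 1))) ∧ ∃ p : ℤ, 0 < p ∧ ∀ i, γ (i + p) = γ i

theorem hasPeriodicWalk_of_closed_walk {α : Type*} {R : α → α → Prop} (c : ℕ → α) {p : ℕ}
    (hp : 0 < p) (hclosed : c p = c 0) (hc : ∀ k < p, R (c k) (c (k + 1))) :
    HasPeriodicWalk R := by
  have hp' : (0 : ℤ) < p := by exact_mod_cast hp
  refine ⟨fun i => c (i % p).toNat, fun i => ?_, p, hp', fun i => by simp⟩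
  show R (c (i % p).toNat) (c ((i + 1) % p).toNat)
  have hr₀ : 0 ≤ i % p := Int.emod_nonneg i hp'.ne'
  have hr₁ : i % p < p := Int.emod_lt_of_pos i hp'
  have hsucc : (i + 1) % p = (i % p + 1) % p := (Int.emod_add_emod i p 1).symm
  have hstep := hc (i % p).toNat (by omega)
  rcases (show i % p + 1 < p ∨ i % p + 1 = p by omega) with hlt | heq
  · rw [hsucc, Int.emod_eq_of_lt (by omega) hlt]
    convert hstep using 3
    omega
  · rw [hsucc, heq, Int.emod_self, Int.toNat_zero, ← hclosed]
    convert hstep using 2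
    omega

theorem hasPeriodicWalk_of_card_le {α : Type*} [Fintype α] {R : α → α → Prop} (w : ℕ → α)
    {N : ℕ} (hN : Fintype.card α ≤ N) (hw : ∀ k < N, R (w k) (w (k + 1))) :
    HasPeriodicWalk R := by
  obtain ⟨a, b, hab, hwab⟩ := Fintype.exists_ne_map_eq_of_card_lt
    (fun k : Fin (N + 1) => w k) (by simpa using Nat.lt_succ_of_le hN)
  wlog hlt : a < b generalizing a b
  · exact this b a hab.symm hwab.symm (lt_of_le_of_ne (not_lt.mp hlt) hab.symm)
  have hlt' : (a : ℕ) < b := hlt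
  refine hasPeriodicWalk_of_closed_walk (fun k => w (a + k)) (p := b - a) (by omega)
    (by simpa [Nat.add_sub_cancel' hlt'.le] using hwab.symm) fun k hk => ?_
  simpa only [Nat.add_assoc] using hw (a + k) (by omega)

theorem path_eq_of_eq_of_le {V Φ : Type*} {E : V → V → Prop} {L : V → Φ}
    (hsu : ∀ v w₁ w₂ : V, E v w₁ → E v w₂ → L w₁ = L w₂ → w₁ = w₂)
    {n : ℕ} {x x' : ℕ → V} (hx : ∀ i < n, E (x i) (x (i + 1)))
    (hx' : ∀ i < n, E (x' i) (x' (i + 1))) (hcol : ∀ i ≤ n, L (x i) = L (x' i))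
    {i j : ℕ} (hij : i ≤ j) (hjn : j ≤ n) (hi : x i = x' i) : x j = x' j := by
  induction j, hij using Nat.le_induction with
  | base => exact hi
  | succ j _ ih =>
    have hj : x j = x' j := ih (by omega)
    exact hsu (x j) _ _ (hx j hjn) (hj ▸ hx' j hjn) (hcol (j + 1) hjn)

theorem observable_with_burn_in_time_general
    {V Φ : Type*} [Fintype V] (E : V → V → Prop) (L : V → Φ)
    (m : ℕ) (hm : Fintype.card V = m)
    (hacyc : ¬ ∃ γ : ℤ → V × V,
      (∀ i, G2Edge E L (γ i) (γ (i + 1))) ∧ ∃ p : ℤ, 0 < p ∧ ∀ i, γ (i + p) = γ i)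
    (hsu : ∀ v w₁ w₂ : V, E v w₁ → E v w₂ → L w₁ = L w₂ → w₁ = w₂)
    (n : ℕ) (x x' : ℕ → V)
    (hx : ∀ i < n, E (x i) (x (i + 1)))
    (hx' : ∀ i < n, E (x' i) (x' (i + 1)))
    (hcol : ∀ i ≤ n, L (x i) = L (x' i)) :
    ∀ s, m ^ 2 ≤ s → s ≤ n → x s = x' s := by
  intro s hs hsn
  by_contra hne
  have hdiff : ∀ k ≤ s, x k ≠ x' k := fun k hk hk' =>
    hne (path_eq_of_eq_of_le hsu hx hx' hcol hk hsn hk')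
  have hcard : Fintype.card (V × V) ≤ s := by simpa [hm, sq] using hs
  exact hacyc <| hasPeriodicWalk_of_card_le (fun k => (x k, x' k)) hcard fun k hk =>
    ⟨hdiff k hk.le, hdiff (k + 1) hk, hx k (by omega), hx' k (by omega), hcol (k + 1) (by omega)⟩

/-- If `V` is finite with `m` nodes, the auxiliary graph `G²` is acyclic (no periodic
cycle), and `G` has no same-colored out-neighbors, then `G` is observable with burn-in
time `T = m²`: any two paths of length `n ≥ m²` with the same color sequence agree at
every index `s` with `m² ≤ s ≤ n`. -/
theorem observable_with_burn_in_time
    {V Φ : Type*} [Fintype V] (E : V → V → Prop) (L : V → Φ)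
    (m : ℕ) (hm : Fintype.card V = m)
    (hacyc : ¬ ∃ γ : ℤ → V × V,
      (∀ i, G2Edge E L (γ i) (γ (i + 1))) ∧ ∃ p : ℤ, 0 < p ∧ ∀ i, γ (i + p) = γ i)
    (hsu : ∀ v w₁ w₂ : V, E v w₁ → E v w₂ → L w₁ = L w₂ → w₁ = w₂)
    (n : ℕ) (hn : m ^ 2 ≤ n) (x x' : ℕ → V)
    (hx : ∀ i < n, E (x i) (x (i + 1)))
    (hx' : ∀ i < n, E (x' i) (x' (i + 1)))
    (hcol : ∀ i ≤ n, L (x i) = L (x' i)) :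
    ∀ s, m ^ 2 ≤ s → s ≤ n → x s = x' s :=
  observable_with_burn_in_time_general E L m hm hacyc hsu n x x' hx hx' hcol
end

section
/- Let G = (V, E, L) be a colored directed graph containing two intersecting cycles with the same coloring: periodic cycles π₁ ≠ π₂ with common period p > 0, L(π₁(i)) = L(π₂(i)) for all i, and π₁(i₀) = π₂(i₀) = v for some i₀. Then the number of hypotheses grows exponentially: for every k ≥ 1 there is a single color sequence w of length kp such that there are at least 2^k distinct paths of length kp starting and ending at v whose color sequence equals w. -/
/-!
Since both cycles pass through `v` at every time `i₀ + n * p`, a path may switch from one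
cycle to the other at the end of each lap of length `p` without changing its colors.
Choosing the cycle independently for each of `k` laps gives `2 ^ k` paths with the colors of
`π₁`, and two different choices are told apart inside a lap where they follow different
cycles, at an offset where the two cycles differ.
-/

namespace Nat

theorem exists_lt_testBit_ne_of_lt_two_pow {a b k : ℕ} (ha : a < 2 ^ k) (hb : b < 2 ^ k)
    (hab : a ≠ b) : ∃ t < k, a.testBit t ≠ b.testBit t := by
  contrapose! hab
  refine Nat.eq_of_testBit_eq fun t => ?_
  rcases lt_or_ge t k with htk | hkt
  · exact hab t htk
  · have hk : 2 ^ k ≤ 2 ^ t := Nat.pow_le_pow_right two_pos hkt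
    rw [testBit_eq_false_of_lt (ha.trans_le hk), testBit_eq_false_of_lt (hb.trans_le hk)]

end Nat

namespace Function.Periodic

variable {α : Type*} {f g : ℤ → α} {p : ℕ}

theorem apply_natCast_of_dvd (hf : Periodic f p) {i : ℕ} (hi : p ∣ i) : f i = f 0 := by
  obtain ⟨m, rfl⟩ := hi
  rw [Nat.cast_mul, mul_comm, hf.nat_mul_eq]

theorem exists_lt_ne_of_ne (hf : Periodic f p) (hg : Periodic g p) (hp : 0 < p)
    (hfg : f ≠ g) : ∃ r < p, f r ≠ g r := by
  obtain ⟨j, hj⟩ := Function.ne_iff.mp hfg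
  have hp' : (0 : ℤ) < p := by exact_mod_cast hp
  have hlt := Int.emod_lt_of_pos j hp'
  refine ⟨(j % p).toNat, by omega, ?_⟩
  rwa [Int.toNat_of_nonneg (Int.emod_nonneg _ hp'.ne'), Int.emod_def, mul_comm, ← smul_eq_mul,
    hf.sub_zsmul_eq, hg.sub_zsmul_eq]

end Function.Periodic

/-- The path that follows the cycle `π (c t)` during its `t`-th lap `[t * p, (t + 1) * p)`. -/
def switchPath {ι V : Type*} (π : ι → ℤ → V) (p : ℕ) (c : ℕ → ι) (i : ℕ) : V :=
  π (c (i / p)) i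

namespace switchPath

variable {ι V : Type*} {π : ι → ℤ → V} {p : ℕ} {c : ℕ → ι} {v : V}

theorem apply_of_dvd (hper : ∀ j, Function.Periodic (π j) p) (hv : ∀ j, π j 0 = v) {i : ℕ}
    (hi : p ∣ i) : switchPath π p c i = v := by
  rw [switchPath, (hper _).apply_natCast_of_dvd hi, hv]

theorem apply_succ (hper : ∀ j, Function.Periodic (π j) p) (hv : ∀ j, π j 0 = v) (i : ℕ) :
    switchPath π p c (i + 1) = π (c (i / p)) (i + 1) := by
  by_cases hi : p ∣ i + 1
  · rw [apply_of_dvd hper hv hi, ← Nat.cast_succ, (hper _).apply_natCast_of_dvd hi, hv]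
  · rw [switchPath, Nat.succ_div_of_not_dvd hi, Nat.cast_succ]

theorem adj {E : V → V → Prop} (hE : ∀ j n, E (π j n) (π j (n + 1)))
    (hper : ∀ j, Function.Periodic (π j) p) (hv : ∀ j, π j 0 = v) (i : ℕ) :
    E (switchPath π p c i) (switchPath π p c (i + 1)) := by
  rw [apply_succ hper hv]
  exact hE _ _

theorem color {Φ : Type*} {L : V → Φ} {w : ℤ → Φ} (hL : ∀ j n, L (π j n) = w n) (i : ℕ) :
    L (switchPath π p c i) = w i :=
  hL _ _

theorem apply_lap (hper : ∀ j, Function.Periodic (π j) p) {r : ℕ} (hr : r < p) (t : ℕ) :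
    switchPath π p c (t * p + r) = π (c t) r := by
  have hdiv : (t * p + r) / p = t := by
    rw [add_comm, Nat.add_mul_div_right _ _ (by omega), Nat.div_eq_of_lt hr, zero_add]
  rw [switchPath, hdiv, Nat.cast_add, Nat.cast_mul, add_comm, (hper _).nat_mul t]

end switchPath

/-- If a colored directed graph contains two intersecting cycles with the same coloring
(periodic cycles `π₁ ≠ π₂` with common period `p > 0`, `L (π₁ i) = L (π₂ i)` for all
`i`, and `π₁ i₀ = π₂ i₀ = v`), then the number of hypotheses grows exponentially: for
every `k ≥ 1` there is a single color sequence `w` of length `k * p` admitting at least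
`2 ^ k` distinct paths of length `k * p` from `v` back to `v` with color sequence `w`. -/
theorem intersecting_cycles_give_exponential_hypothesis_growth
    {V Φ : Type*} (E : V → V → Prop) (L : V → Φ)
    (π₁ π₂ : ℤ → V) (p : ℕ) (hp : 0 < p)
    (hedge₁ : ∀ i, E (π₁ i) (π₁ (i + 1)))
    (hper₁ : ∀ i, π₁ (i + (p : ℤ)) = π₁ i)
    (hedge₂ : ∀ i, E (π₂ i) (π₂ (i + 1)))
    (hper₂ : ∀ i, π₂ (i + (p : ℤ)) = π₂ i)
    (hne : π₁ ≠ π₂)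
    (hcol : ∀ i, L (π₁ i) = L (π₂ i))
    (v : V) (i₀ : ℤ) (hint₁ : π₁ i₀ = v) (hint₂ : π₂ i₀ = v) :
    ∀ k : ℕ, 1 ≤ k → ∃ w : ℕ → Φ, ∃ f : Fin (2 ^ k) → (ℕ → V),
      (∀ a : Fin (2 ^ k),
        f a 0 = v ∧ f a (k * p) = v ∧
        (∀ i < k * p, E (f a i) (f a (i + 1))) ∧
        (∀ i ≤ k * p, L (f a i) = w i)) ∧
      (∀ a b : Fin (2 ^ k), a ≠ b → ∃ i ≤ k * p, f a i ≠ f b i) := by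
  intro k _
  set σ : Bool → ℤ → V := fun b n => cond b π₂ π₁ (i₀ + n)
  have hper : ∀ b, Function.Periodic (σ b) p :=
    Bool.forall_bool.2
      ⟨Function.Periodic.const_add hper₁ i₀, Function.Periodic.const_add hper₂ i₀⟩
  have hv : ∀ b, σ b 0 = v :=
    Bool.forall_bool.2 ⟨by simpa [σ] using hint₁, by simpa [σ] using hint₂⟩
  have hE : ∀ b n, E (σ b n) (σ b (n + 1)) := by
    refine Bool.forall_bool.2 ⟨fun n => ?_, fun n => ?_⟩ <;> simp only [σ, cond, ← add_assoc]
    exacts [hedge₁ _, hedge₂ _]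
  have hL : ∀ b n, L (σ b n) = L (π₁ (i₀ + n)) :=
    Bool.forall_bool.2 ⟨fun _ => rfl, fun _ => (hcol _).symm⟩
  obtain ⟨r, hr, hσr⟩ := (hper false).exists_lt_ne_of_ne (hper true) hp fun h => hne <| by
    ext n; simpa [σ] using congr_fun h (n - i₀)
  -- The `a`-th path follows `π₂` during lap `t` exactly when bit `t` of `a` is set.
  refine ⟨fun i => L (π₁ (i₀ + i)), fun a => switchPath σ p (a : ℕ).testBit,
    fun a => ⟨switchPath.apply_of_dvd hper hv (dvd_zero p),
      switchPath.apply_of_dvd hper hv (dvd_mul_left p k),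
      fun i _ => switchPath.adj hE hper hv i, fun i _ => switchPath.color hL i⟩,
    fun a b hab => ?_⟩
  obtain ⟨t, htk, hbit⟩ :=
    Nat.exists_lt_testBit_ne_of_lt_two_pow a.isLt b.isLt (Fin.val_ne_of_ne hab)
  refine ⟨t * p + r, by nlinarith, ?_⟩
  dsimp only
  rw [switchPath.apply_lap hper hr, switchPath.apply_lap hper hr]
  revert hbit
  cases (a : ℕ).testBit t <;> cases (b : ℕ).testBit t <;> simp [hσr, hσr.symm]
end
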